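/- Under the moment assumptions above, if positive and negative pair distributions both satisfy the standardisation/uncorrelation/independence assumptions, then the total expected loss E_{p+}[||P(h-h') + Q(t-t')||^2] - E_{p-}[||P(h-h') + Q(t-t')||^2] equals zero for every choice of matrices P, Q in R^{d×d}. -/

import Mathlib

/-!
Unit variances together with `E[hᵢ tᵢ] = 1` force `E[(hᵢ - tᵢ)²] = 0`, so `h = t` and likewise
`h' = t'` almost surely, and the loss is `E ‖(P + Q)(h - h')‖²`. Centring and independence make
the coordinates of `h - h'` orthogonal with second moment `2`, so under either distribution the
loss equals `2 ‖P + Q‖²_F`.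
-/

open MeasureTheory ProbabilityTheory

/-- The standardisation/uncorrelation/independence assumptions on a distribution over
quadruples `(h, t, h', t')` of random vectors in `ℝ^d`. -/
def StdAssumptions {Ω : Type*} [MeasurableSpace Ω] (μ : Measure Ω) {d : ℕ}
    (h t h' t' : Fin d → Ω → ℝ) : Prop :=
  (∀ i, MemLp (h i) 2 μ) ∧ (∀ i, MemLp (t i) 2 μ) ∧
  (∀ i, MemLp (h' i) 2 μ) ∧ (∀ i, MemLp (t' i) 2 μ) ∧
  (∀ i j, i ≠ j → ∫ ω, h i ω * h j ω ∂μ = 0) ∧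
  (∀ i j, i ≠ j → ∫ ω, t i ω * t j ω ∂μ = 0) ∧
  (∀ i j, i ≠ j → ∫ ω, h i ω * t j ω ∂μ = 0) ∧
  (∀ i j, i ≠ j → ∫ ω, h' i ω * h' j ω ∂μ = 0) ∧
  (∀ i j, i ≠ j → ∫ ω, t' i ω * t' j ω ∂μ = 0) ∧
  (∀ i j, i ≠ j → ∫ ω, h' i ω * t' j ω ∂μ = 0) ∧
  (∀ i, ∫ ω, h i ω ∂μ = 0) ∧ (∀ i, ∫ ω, t i ω ∂μ = 0) ∧
  (∀ i, ∫ ω, h' i ω ∂μ = 0) ∧ (∀ i, ∫ ω, t' i ω ∂μ = 0) ∧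
  (∀ i, ∫ ω, h i ω ^ 2 ∂μ = 1) ∧ (∀ i, ∫ ω, t i ω ^ 2 ∂μ = 1) ∧
  (∀ i, ∫ ω, h' i ω ^ 2 ∂μ = 1) ∧ (∀ i, ∫ ω, t' i ω ^ 2 ∂μ = 1) ∧
  (∀ i, ∫ ω, h i ω * t i ω ∂μ = 1) ∧ (∀ i, ∫ ω, h' i ω * t' i ω ∂μ = 1) ∧
  IndepFun (fun ω => (fun i => h i ω, fun i => t i ω))
    (fun ω => (fun i => h' i ω, fun i => t' i ω)) μ

section L2

variable {Ω : Type*} [MeasurableSpace Ω] {μ : Measure Ω}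

lemma integral_sub_mul_sub {f g u v : Ω → ℝ} (hf : MemLp f 2 μ) (hg : MemLp g 2 μ)
    (hu : MemLp u 2 μ) (hv : MemLp v 2 μ) :
    ∫ ω, (f ω - u ω) * (g ω - v ω) ∂μ
      = (∫ ω, f ω * g ω ∂μ) - (∫ ω, f ω * v ω ∂μ) - (∫ ω, u ω * g ω ∂μ)
        + ∫ ω, u ω * v ω ∂μ := by
  have hfg : Integrable (fun ω => f ω * g ω) μ := hf.integrable_mul hg
  have hfv : Integrable (fun ω => f ω * v ω) μ := hf.integrable_mul hv
  have hug : Integrable (fun ω => u ω * g ω) μ := hu.integrable_mul hg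
  have huv : Integrable (fun ω => u ω * v ω) μ := hu.integrable_mul hv
  have hfgv : Integrable (fun ω => f ω * g ω - f ω * v ω) μ := hfg.sub hfv
  have hugv : Integrable (fun ω => u ω * g ω - u ω * v ω) μ := hug.sub huv
  simp_rw [sub_mul, mul_sub]
  rw [integral_sub hfgv hugv, integral_sub hfg hfv, integral_sub hug huv]
  ring

lemma ae_eq_of_integral_sq_eq_integral_mul {f g : Ω → ℝ} (hf : MemLp f 2 μ)
    (hg : MemLp g 2 μ) (hff : ∫ ω, f ω ^ 2 ∂μ = ∫ ω, f ω * g ω ∂μ)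
    (hgg : ∫ ω, g ω ^ 2 ∂μ = ∫ ω, f ω * g ω ∂μ) :
    f =ᵐ[μ] g := by
  have hzero : ∫ ω, (f ω - g ω) * (f ω - g ω) ∂μ = 0 := by
    rw [integral_sub_mul_sub hf hf hg hg]
    simp_rw [← sq, mul_comm (g _) (f _)]
    rw [hff, hgg, sub_self, zero_sub, neg_add_cancel]
  have hsq := (integral_eq_zero_iff_of_nonneg (fun ω => mul_self_nonneg (f ω - g ω))
    ((hf.sub hg).integrable_mul (hf.sub hg))).1 hzero
  filter_upwards [hsq] with ω hω
  exact sub_eq_zero.1 (mul_self_eq_zero.1 hω)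

lemma integral_sum_mul_sq {ι : Type*} [Fintype ι] {Z : ι → Ω → ℝ}
    (hZ : ∀ i, MemLp (Z i) 2 μ) (a : ι → ℝ) :
    ∫ ω, (∑ i, a i * Z i ω) ^ 2 ∂μ
      = ∑ i, ∑ j, a i * a j * ∫ ω, Z i ω * Z j ω ∂μ := by
  have hint : ∀ i j, Integrable (fun ω => a i * a j * (Z i ω * Z j ω)) μ :=
    fun i j => ((hZ i).integrable_mul (hZ j)).const_mul _
  calc ∫ ω, (∑ i, a i * Z i ω) ^ 2 ∂μ
      = ∫ ω, ∑ i, ∑ j, a i * a j * (Z i ω * Z j ω) ∂μ := by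
        congr with ω
        rw [sq, Finset.sum_mul_sum]
        exact Finset.sum_congr rfl fun i _ => Finset.sum_congr rfl fun j _ => by ring
    _ = ∑ i, ∑ j, ∫ ω, a i * a j * (Z i ω * Z j ω) ∂μ := by
        rw [integral_finsetSum _ fun i _ => integrable_finsetSum _ fun j _ => hint i j]
        exact Finset.sum_congr rfl fun i _ => integral_finsetSum _ fun j _ => hint i j
    _ = ∑ i, ∑ j, a i * a j * ∫ ω, Z i ω * Z j ω ∂μ := by
        simp only [integral_const_mul]

lemma integral_sum_mul_sq_of_orthogonal {ι : Type*} [Fintype ι] [DecidableEq ι]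
    {Z : ι → Ω → ℝ} (hZ : ∀ i, MemLp (Z i) 2 μ) {c : ℝ}
    (horth : ∀ i j, ∫ ω, Z i ω * Z j ω ∂μ = if i = j then c else 0) (a : ι → ℝ) :
    ∫ ω, (∑ i, a i * Z i ω) ^ 2 ∂μ = c * ∑ i, a i ^ 2 := by
  rw [integral_sum_mul_sq hZ]
  simp [horth, Finset.mul_sum, sq, mul_comm]

end L2

namespace StdAssumptions

variable {Ω : Type*} [MeasurableSpace Ω] {μ : Measure Ω} {d : ℕ}
  {h t h' t' : Fin d → Ω → ℝ}

lemma head_ae_eq_tail (H : StdAssumptions μ h t h' t') (i : Fin d) :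
    h i =ᵐ[μ] t i ∧ h' i =ᵐ[μ] t' i := by
  obtain ⟨Lh, Lt, Lh', Lt', -, -, -, -, -, -, -, -, -, -, Vh, Vt, Vh', Vt', Pht, Ph't', -⟩ := H
  exact ⟨ae_eq_of_integral_sq_eq_integral_mul (Lh i) (Lt i) ((Vh i).trans (Pht i).symm)
      ((Vt i).trans (Pht i).symm),
    ae_eq_of_integral_sq_eq_integral_mul (Lh' i) (Lt' i) ((Vh' i).trans (Ph't' i).symm)
      ((Vt' i).trans (Ph't' i).symm)⟩

lemma integral_mul_primed_eq_zero (H : StdAssumptions μ h t h' t') (i j : Fin d) :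
    ∫ ω, h i ω * h' j ω ∂μ = 0 ∧ ∫ ω, h' i ω * h j ω ∂μ = 0 := by
  obtain ⟨Lh, -, Lh', -, -, -, -, -, -, -, Eh, -, Eh', -, -, -, -, -, -, -, Ind⟩ := H
  have hfst : ∀ k : Fin d, Measurable fun p : (Fin d → ℝ) × (Fin d → ℝ) => p.1 k :=
    fun k => (measurable_pi_apply k).comp measurable_fst
  have hind : IndepFun (h i) (h' j) μ := Ind.comp (hfst i) (hfst j)
  have hind' : IndepFun (h' i) (h j) μ := Ind.symm.comp (hfst i) (hfst j)
  rw [hind.integral_fun_mul_eq_mul_integral (Lh i).1 (Lh' j).1,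
    hind'.integral_fun_mul_eq_mul_integral (Lh' i).1 (Lh j).1, Eh i, Eh' i]
  simp

lemma integral_sub_mul_sub_eq_ite (H : StdAssumptions μ h t h' t') (i j : Fin d) :
    ∫ ω, (h i ω - h' i ω) * (h j ω - h' j ω) ∂μ = if i = j then 2 else 0 := by
  obtain ⟨hcross, hcross'⟩ := H.integral_mul_primed_eq_zero i j
  obtain ⟨Lh, -, Lh', -, Chh, -, -, Ch'h', -, -, -, -, -, -, Vh, -, Vh', -⟩ := H
  rw [integral_sub_mul_sub (Lh i) (Lh j) (Lh' i) (Lh' j), hcross, hcross']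
  split_ifs with hij
  · subst hij
    simp_rw [← sq]
    rw [Vh i, Vh' i]
    norm_num
  · rw [Chh i j hij, Ch'h' i j hij]
    norm_num

lemma integral_loss (H : StdAssumptions μ h t h' t') (P Q : Matrix (Fin d) (Fin d) ℝ) :
    ∫ ω, ∑ k, (∑ i, P k i * (h i ω - h' i ω) + ∑ i, Q k i * (t i ω - t' i ω)) ^ 2 ∂μ
      = 2 * ∑ k, ∑ i, (P k i + Q k i) ^ 2 := by
  have hX : ∀ i, MemLp (fun ω => h i ω - h' i ω) 2 μ := fun i => (H.1 i).sub (H.2.2.1 i)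
  have hreduce : (fun ω =>
      ∑ k, (∑ i, P k i * (h i ω - h' i ω) + ∑ i, Q k i * (t i ω - t' i ω)) ^ 2)
      =ᵐ[μ] fun ω => ∑ k, (∑ i, (P k i + Q k i) * (h i ω - h' i ω)) ^ 2 := by
    filter_upwards [ae_all_iff.2 fun i => (H.head_ae_eq_tail i).1,
      ae_all_iff.2 fun i => (H.head_ae_eq_tail i).2] with ω ht ht'
    simp only [← ht, ← ht', ← Finset.sum_add_distrib, add_mul]
  rw [integral_congr_ae hreduce,
    integral_finsetSum _ fun k _ => (memLp_finsetSum _ fun i _ => (hX i).const_mul _).integrable_sq,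
    Finset.mul_sum]
  exact Finset.sum_congr rfl fun k _ =>
    integral_sum_mul_sq_of_orthogonal hX H.integral_sub_mul_sub_eq_ite _

end StdAssumptions

theorem stmt_6_general {Ω : Type*} [MeasurableSpace Ω] (μp μm : Measure Ω)
    {d : ℕ} (h t h' t' : Fin d → Ω → ℝ)
    (hp : StdAssumptions μp h t h' t') (hm : StdAssumptions μm h t h' t')
    (P Q : Matrix (Fin d) (Fin d) ℝ) :
    (∫ ω, ∑ k, (∑ i, P k i * (h i ω - h' i ω) + ∑ i, Q k i * (t i ω - t' i ω)) ^ 2 ∂μp)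
      - (∫ ω, ∑ k, (∑ i, P k i * (h i ω - h' i ω)
          + ∑ i, Q k i * (t i ω - t' i ω)) ^ 2 ∂μm) = 0 := by
  rw [hp.integral_loss, hm.integral_loss, sub_self]

/-- If the positive and negative pair distributions both satisfy the
standardisation/uncorrelation/independence assumptions, then the total expected loss
`E_{p+}[‖P(h-h') + Q(t-t')‖²] - E_{p-}[‖P(h-h') + Q(t-t')‖²]` is zero for every `P, Q`. -/
theorem stmt_6 {Ω : Type*} [MeasurableSpace Ω] (μp μm : Measure Ω)
    [IsProbabilityMeasure μp] [IsProbabilityMeasure μm]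
    {d : ℕ} (h t h' t' : Fin d → Ω → ℝ)
    (hp : StdAssumptions μp h t h' t') (hm : StdAssumptions μm h t h' t')
    (P Q : Matrix (Fin d) (Fin d) ℝ) :
    (∫ ω, ∑ k, (∑ i, P k i * (h i ω - h' i ω) + ∑ i, Q k i * (t i ω - t' i ω)) ^ 2 ∂μp)
      - (∫ ω, ∑ k, (∑ i, P k i * (h i ω - h' i ω)
          + ∑ i, Q k i * (t i ω - t' i ω)) ^ 2 ∂μm) = 0 :=
  stmt_6_general μp μm h t h' t' hp hm P Q
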